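/- Assume k₁,k₂,k ∈ ℤ with k₁ ≤ k₂, let β₂ ∈ ℝ, and let g : ℝ³ → [0,∞) be an L² function supported in Ĩ_k × ℝ × ℝ. Let S' = {(ξ₁,ξ₂,β) ∈ ℝ³ : ξ₁ ∈ Ĩ_{k₁}, ξ₂ ∈ Ĩ_{k₂}, ξ₁+ξ₂ ≥ 0, |β| ≤ 2^{−10}(ξ₁+ξ₂)}, and define A(ξ₁,ξ₂,β) = √3·ξ₁² − √3·ξ₂² + βξ₁ and B(ξ₁,ξ₂,β) = ξ₁ξ₂β·(2√3 + β/(ξ₁+ξ₂)). Then (∫_{S'} |g(ξ₁+ξ₂, A(ξ₁,ξ₂,β)+β₂(ξ₁+ξ₂), B(ξ₁,ξ₂,β))|² dξ₁dξ₂dβ)^{1/2} ≲ 2^{−(k₁+k₂+k)/2}·‖g‖_{L²}, with the implicit constant independent of all parameters. -/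

import Mathlib

open MeasureTheory

/-- The dyadic frequency annulus `Ĩ_k = {ξ : 2^(k-1) ≤ |ξ| ≤ 2^(k+1)}`. -/
def Itilde (k : ℤ) : Set ℝ := {ξ : ℝ | (2 : ℝ) ^ (k - 1) ≤ |ξ| ∧ |ξ| ≤ (2 : ℝ) ^ (k + 1)}

/-!
Write `Φ(x, y, b) = (x + y, A + β₂ (x + y), B)`, `u = x + y` and `d = 2√3 u + b`. Then
`A = d x - √3 u²` and `B = (d x) (y b) / u`, so for fixed `u` the value of `Φ` determines `d x`
and `y b`, hence also `d + 2√3 x`: the pair `{d, 2√3 x}` is determined as the roots of a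
quadratic. The swapped solution forces `b = -2√3 y`, which the cone condition `|b| ≤ 2⁻¹⁰ u`
rules out once `|x| ≤ 4 |y|` (this is where `k₁ ≤ k₂` enters), so `Φ` is injective there. Its
Jacobian determinant is `-d x (2√3 y + b)`, of size at least `9 u |x| |y| ≥ 2^(k₁ + k₂ + k)`
wherever `g ∘ Φ` can be nonzero, and the change of variables formula gives the bound with
constant `1`.
-/

open Set
open scoped ENNReal

theorem eq_and_eq_or_eq_and_eq_of_add_eq_of_mul_eq {R : Type*} [CommRing R] [NoZeroDivisors R]
    {a b c d : R} (hs : a + b = c + d) (hp : a * b = c * d) :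
    (a = c ∧ b = d) ∨ (a = d ∧ b = c) := by
  have h : (a - c) * (a - d) = 0 := by linear_combination a * hs - hp
  rcases mul_eq_zero.1 h with h | h
  · exact .inl ⟨sub_eq_zero.1 h, by linear_combination hs - h⟩
  · exact .inr ⟨sub_eq_zero.1 h, by linear_combination hs - h⟩

section ChangeOfVariables

variable {E : Type*} [NormedAddCommGroup E] [NormedSpace ℝ E] [FiniteDimensional ℝ E]
  [MeasurableSpace E] [BorelSpace E] (μ : Measure E) [μ.IsAddHaarMeasure]
  {s : Set E} {f : E → E} {f' : E → E →L[ℝ] E}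

theorem mul_setLIntegral_comp_le_lintegral (hs : MeasurableSet s)
    (hf' : ∀ x ∈ s, HasFDerivWithinAt f (f' x) s x) (hf : InjOn f s) {D : ℝ≥0∞}
    (hD : ∀ x ∈ s, D ≤ ENNReal.ofReal |(f' x).det|) (G : E → ℝ≥0∞) :
    D * ∫⁻ x in s, G (f x) ∂μ ≤ ∫⁻ y, G y ∂μ :=
  calc D * ∫⁻ x in s, G (f x) ∂μ
      ≤ ∫⁻ x in s, ENNReal.ofReal |(f' x).det| * G (f x) ∂μ :=
        (lintegral_const_mul_le _ _).trans <| setLIntegral_mono' hs fun x hx => by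
          gcongr; exact hD x hx
    _ = ∫⁻ y in f '' s, G y ∂μ :=
        (lintegral_image_eq_lintegral_abs_det_fderiv_mul μ hs hf' hf G).symm
    _ ≤ ∫⁻ y, G y ∂μ := setLIntegral_le_lintegral _ _

theorem setLIntegral_sq_comp_rpow_half_le (hs : MeasurableSet s)
    (hf' : ∀ x ∈ s, HasFDerivWithinAt f (f' x) s x) (hf : InjOn f s) {c : ℝ} (hc : 0 < c)
    (hdet : ∀ x ∈ s, c ≤ |(f' x).det|) (g : E → ℝ) :
    (∫⁻ x in s, ENNReal.ofReal (|g (f x)| ^ 2) ∂μ) ^ (1 / 2 : ℝ) ≤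
      ENNReal.ofReal (c ^ (-1 / 2 : ℝ)) * eLpNorm g 2 μ := by
  have hsq : ∫⁻ y, ENNReal.ofReal (|g y| ^ 2) ∂μ = eLpNorm g 2 μ ^ (2 : ℝ) := by
    rw [eLpNorm_eq_lintegral_rpow_enorm_toReal two_ne_zero ENNReal.ofNat_ne_top,
      ← ENNReal.rpow_mul]
    norm_num [Real.enorm_eq_ofReal_abs, ← ENNReal.ofReal_pow]
  have hmain := mul_setLIntegral_comp_le_lintegral μ hs hf' hf
    (fun x hx => ENNReal.ofReal_le_ofReal (hdet x hx)) fun y => ENNReal.ofReal (|g y| ^ 2)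
  rw [hsq, mul_comm, ← ENNReal.le_div_iff_mul_le (by simp [hc]) (by simp)] at hmain
  calc _ ≤ (eLpNorm g 2 μ ^ (2 : ℝ) / ENNReal.ofReal c) ^ (1 / 2 : ℝ) := by gcongr
    _ = _ := by
      rw [div_eq_mul_inv, ENNReal.mul_rpow_of_nonneg _ _ (by norm_num), ← ENNReal.rpow_mul,
        ← ENNReal.ofReal_inv_of_pos hc, ENNReal.ofReal_rpow_of_pos (by positivity),
        ← Real.rpow_neg_one, ← Real.rpow_mul hc.le]
      norm_num [mul_comm]

end ChangeOfVariables

instance : (volume : Measure (ℝ × ℝ)).IsAddHaarMeasure :=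
  Measure.prod.instIsAddHaarMeasure _ _

instance : (volume : Measure (ℝ × ℝ × ℝ)).IsAddHaarMeasure :=
  Measure.prod.instIsAddHaarMeasure _ _

@[simps]
def prodFinThreeEquiv (R : Type*) [CommSemiring R] : (R × R × R) ≃ₗ[R] (Fin 3 → R) where
  toFun p := ![p.1, p.2.1, p.2.2]
  invFun v := (v 0, v 1, v 2)
  map_add' p q := by ext i; fin_cases i <;> rfl
  map_smul' c p := by ext i; fin_cases i <;> rfl
  left_inv p := rfl
  right_inv v := by ext i; fin_cases i <;> rfl

noncomputable def Matrix.toProdThreeCLM (M : Matrix (Fin 3) (Fin 3) ℝ) :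
    (ℝ × ℝ × ℝ) →L[ℝ] ℝ × ℝ × ℝ :=
  LinearMap.toContinuousLinearMap ((prodFinThreeEquiv ℝ).symm.conj (Matrix.toLin' M))

namespace Matrix
variable (M : Matrix (Fin 3) (Fin 3) ℝ)

theorem det_toProdThreeCLM : M.toProdThreeCLM.det = M.det := by
  rw [toProdThreeCLM, ContinuousLinearMap.det, LinearMap.coe_toContinuousLinearMap]
  exact (LinearMap.det_conj (toLin' M) (prodFinThreeEquiv ℝ).symm).trans
    (LinearMap.det_toLin' M)

theorem toProdThreeCLM_apply (p : ℝ × ℝ × ℝ) :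
    M.toProdThreeCLM p = (M 0 0 * p.1 + M 0 1 * p.2.1 + M 0 2 * p.2.2,
      M 1 0 * p.1 + M 1 1 * p.2.1 + M 1 2 * p.2.2,
      M 2 0 * p.1 + M 2 1 * p.2.1 + M 2 2 * p.2.2) := by
  simp [toProdThreeCLM, LinearEquiv.conj_apply_apply, mulVec, dotProduct, Fin.sum_univ_three]

end Matrix

noncomputable def Φ (β₂ : ℝ) (q : ℝ × ℝ × ℝ) : ℝ × ℝ × ℝ :=
  (q.1 + q.2.1,
    √3 * q.1 ^ 2 - √3 * q.2.1 ^ 2 + q.2.2 * q.1 + β₂ * (q.1 + q.2.1),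
    q.1 * q.2.1 * q.2.2 * (2 * √3 + q.2.2 / (q.1 + q.2.1)))

noncomputable def jacobianΦ (β₂ x y b : ℝ) : Matrix (Fin 3) (Fin 3) ℝ :=
  !![1, 1, 0;
    2 * √3 * x + b + β₂, -(2 * √3 * y) + β₂, x;
    y * b * (2 * √3 + b / (x + y)) - x * y * (b / (x + y)) ^ 2,
      x * b * (2 * √3 + b / (x + y)) - x * y * (b / (x + y)) ^ 2,
      x * y * (2 * √3 + 2 * b / (x + y))]

theorem det_jacobianΦ (β₂ : ℝ) {x y : ℝ} (b : ℝ) (hu : x + y ≠ 0) :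
    (jacobianΦ β₂ x y b).det = -((2 * √3 * (x + y) + b) * x * (2 * √3 * y + b)) := by
  rw [jacobianΦ, Matrix.det_fin_three]
  simp only [Matrix.of_apply, Matrix.cons_val', Matrix.cons_val_zero, Matrix.cons_val_one,
    Matrix.cons_val_two, Matrix.empty_val', Matrix.cons_val_fin_one, Matrix.head_cons,
    Matrix.tail_cons, Matrix.head_fin_const]
  field_simp
  ring

theorem hasFDerivAt_Φ (β₂ : ℝ) {q : ℝ × ℝ × ℝ} (hu : q.1 + q.2.1 ≠ 0) :
    HasFDerivAt (Φ β₂) (jacobianΦ β₂ q.1 q.2.1 q.2.2).toProdThreeCLM q := by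
  have hx : HasFDerivAt (𝕜 := ℝ) (fun q : ℝ × ℝ × ℝ => q.1) _ q := hasFDerivAt_fst
  have hy : HasFDerivAt (𝕜 := ℝ) (fun q : ℝ × ℝ × ℝ => q.2.1) _ q :=
    hasFDerivAt_fst.comp q hasFDerivAt_snd
  have hb : HasFDerivAt (𝕜 := ℝ) (fun q : ℝ × ℝ × ℝ => q.2.2) _ q :=
    hasFDerivAt_snd.comp q hasFDerivAt_snd
  have hinv := (hasFDerivAt_inv' hu).comp q (hx.add hy)
  have h₂ := ((((hx.mul hx).const_mul √3).sub ((hy.mul hy).const_mul √3)).add (hb.mul hx)).add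
    ((hx.add hy).const_mul β₂)
  have h₃ := ((hx.mul hy).mul hb).mul ((hasFDerivAt_const (2 * √3) q).add (hb.mul hinv))
  unfold Φ
  simp only [pow_two, div_eq_mul_inv]
  refine ((hx.add hy).prodMk (h₂.prodMk h₃)).congr_fderiv ?_
  refine ContinuousLinearMap.ext fun p => ?_
  simp only [smul_add, Pi.mul_apply, ContinuousLinearMap.comp_add, ContinuousLinearMap.neg_comp,
    smul_neg, Function.comp_apply, Pi.add_apply, zero_add, ContinuousLinearMap.prod_apply,
    add_apply, ContinuousLinearMap.coe_fst', ContinuousLinearMap.comp_apply,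
    ContinuousLinearMap.coe_snd', sub_apply, smul_apply,
    smul_eq_mul, neg_apply, ContinuousLinearMap.mulLeftRight_apply, jacobianΦ,
    Matrix.toProdThreeCLM_apply, Matrix.of_apply, Matrix.cons_val', Matrix.cons_val_zero,
    Matrix.cons_val_fin_one, one_mul, Matrix.cons_val_one, Matrix.cons_val, zero_mul, add_zero,
    Prod.mk.injEq, true_and]
  constructor <;> ring

theorem seventeen_tenths_le_sqrt_three : (1.7 : ℝ) ≤ √3 :=
  Real.le_sqrt_of_sq_le (by norm_num)

theorem three_mul_le_two_sqrt_three_mul_add {u b : ℝ} (hb : |b| ≤ u / 1024) :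
    3 * u ≤ 2 * √3 * u + b := by
  have hu : 0 ≤ u := by linarith [abs_nonneg b]
  nlinarith [neg_abs_le b, seventeen_tenths_le_sqrt_three]

theorem three_mul_abs_le_abs_two_sqrt_three_mul_add {x y b : ℝ} (hb : |b| ≤ (x + y) / 1024)
    (hxy : |x| ≤ 4 * |y|) : 3 * |y| ≤ |2 * √3 * y + b| := by
  have hb' : |b| ≤ 5 * |y| / 1024 := by
    linarith [le_abs_self x, le_abs_self y]
  calc 3 * |y| ≤ 2 * √3 * |y| - |b| := by
        nlinarith [abs_nonneg y, seventeen_tenths_le_sqrt_three]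
    _ = |2 * √3 * y| - |b| := by
        rw [abs_mul, abs_of_pos (by positivity : (0 : ℝ) < 2 * √3)]
    _ ≤ |2 * √3 * y + b| := by
        simpa using abs_sub_abs_le_abs_sub (2 * √3 * y) (-b)

def coneSet : Set (ℝ × ℝ × ℝ) :=
  {q | 0 < q.1 + q.2.1 ∧ q.1 ≠ 0 ∧ |q.2.2| ≤ (q.1 + q.2.1) / 1024 ∧ |q.1| ≤ 4 * |q.2.1|}

theorem injOn_Φ_coneSet (β₂ : ℝ) : InjOn (Φ β₂) coneSet := by
  rintro ⟨x, y, b⟩ ⟨hu, hx, hb, hxy⟩ ⟨x', y', b'⟩ ⟨-, -, hb', -⟩ h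
  simp only [Φ, Prod.mk.injEq] at h hu hx hb hxy hb' ⊢
  obtain ⟨hu', h₂, h₃⟩ := h
  rw [← hu'] at h₃ hb'
  set s := √3
  have hd : 0 < 2 * s * (x + y) + b := by linarith [three_mul_le_two_sqrt_three_mul_add hb]
  have hdx : (2 * s * (x + y) + b) * x = (2 * s * (x + y) + b') * x' := by
    linear_combination h₂ + (s * (x + y + x' + y') - 2 * s * x' - β₂) * hu'
  have hyb : y * b = y' * b' := by
    refine mul_left_cancel₀ (mul_ne_zero hd.ne' hx) ?_
    field_simp at h₃
    linear_combination h₃ - y' * b' * hdx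
  have hsum : (2 * s * (x + y) + b) + 2 * s * x = (2 * s * (x + y) + b') + 2 * s * x' := by
    refine mul_left_cancel₀ hu.ne' ?_
    linear_combination hyb + hdx - b' * hu'
  rcases eq_and_eq_or_eq_and_eq_of_add_eq_of_mul_eq hsum (by linear_combination 2 * s * hdx)
    with ⟨hdd, hxx⟩ | ⟨-, hswap⟩
  · have hx' : x = x' := mul_left_cancel₀ (by positivity : 2 * s ≠ 0) hxx
    exact ⟨hx', by linarith, by linarith⟩
  · have hy : y = 0 := by
      have := three_mul_abs_le_abs_two_sqrt_three_mul_add hb' hxy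
      rw [show 2 * s * y + b' = 0 by linear_combination -hswap, abs_zero] at this
      exact abs_nonpos_iff.1 (by linarith)
    exact absurd (abs_nonpos_iff.1 (by simpa [hy] using hxy)) hx

theorem nine_mul_le_abs_det_jacobianΦ (β₂ : ℝ) {q : ℝ × ℝ × ℝ} (hq : q ∈ coneSet) :
    9 * ((q.1 + q.2.1) * |q.1| * |q.2.1|) ≤ |(jacobianΦ β₂ q.1 q.2.1 q.2.2).det| := by
  obtain ⟨hu, -, hb, hxy⟩ := hq
  have hd := three_mul_le_two_sqrt_three_mul_add hb
  have hc := three_mul_abs_le_abs_two_sqrt_three_mul_add hb hxy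
  rw [det_jacobianΦ β₂ _ hu.ne', abs_neg, abs_mul, abs_mul,
    abs_of_pos (show 0 < 2 * √3 * (q.1 + q.2.1) + q.2.2 by linarith)]
  calc 9 * ((q.1 + q.2.1) * |q.1| * |q.2.1|)
        = 3 * (q.1 + q.2.1) * |q.1| * (3 * |q.2.1|) := by ring
    _ ≤ _ := by gcongr; exact mul_nonneg (by linarith) (abs_nonneg _)

theorem measurableSet_Itilde (k : ℤ) : MeasurableSet (Itilde k) :=
  measurableSet_Icc.preimage continuous_abs.measurable

theorem abs_le_four_mul_abs_of_mem_Itilde {k₁ k₂ : ℤ} (hk : k₁ ≤ k₂) {x y : ℝ}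
    (hx : x ∈ Itilde k₁) (hy : y ∈ Itilde k₂) : |x| ≤ 4 * |y| :=
  calc |x| ≤ 2 ^ (k₁ + 1) := hx.2
    _ ≤ 2 ^ (k₂ + 1) := zpow_le_zpow_right₀ one_le_two (by omega)
    _ = 4 * 2 ^ (k₂ - 1) := by
        rw [show k₂ + 1 = k₂ - 1 + 2 by ring, zpow_add₀ two_ne_zero]; norm_num [mul_comm]
    _ ≤ 4 * |y| := by gcongr; exact hy.1

def sPrime (k₁ k₂ : ℤ) : Set (ℝ × ℝ × ℝ) :=
  {q | q.1 ∈ Itilde k₁ ∧ q.2.1 ∈ Itilde k₂ ∧ 0 ≤ q.1 + q.2.1 ∧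
    |q.2.2| ≤ (2 : ℝ) ^ (-10 : ℤ) * (q.1 + q.2.1)}

theorem measurableSet_sPrime (k₁ k₂ : ℤ) : MeasurableSet (sPrime k₁ k₂) :=
  have hu : Measurable fun q : ℝ × ℝ × ℝ => q.1 + q.2.1 := by fun_prop
  (measurable_fst (measurableSet_Itilde k₁)).inter <|
    (measurable_snd.fst (measurableSet_Itilde k₂)).inter <|
    (measurableSet_le measurable_const hu).inter
      (measurableSet_le measurable_snd.snd.abs (hu.const_mul _))

theorem sPrime_inter_subset_coneSet {k₁ k₂ : ℤ} (hk : k₁ ≤ k₂) (k : ℤ) :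
    sPrime k₁ k₂ ∩ {q | q.1 + q.2.1 ∈ Itilde k} ⊆ coneSet := by
  rintro q ⟨⟨hx, hy, hu, hb⟩, hu'⟩
  refine ⟨?_, ?_, by norm_num at hb ⊢; linarith, abs_le_four_mul_abs_of_mem_Itilde hk hx hy⟩
  · rw [← abs_of_nonneg hu]; exact lt_of_lt_of_le (by positivity) hu'.1
  · rw [← abs_pos]; exact lt_of_lt_of_le (by positivity) hx.1

theorem zpow_le_abs_det_jacobianΦ {k₁ k₂ : ℤ} (hk : k₁ ≤ k₂) (k : ℤ) (β₂ : ℝ)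
    {q : ℝ × ℝ × ℝ} (hq : q ∈ sPrime k₁ k₂ ∩ {q | q.1 + q.2.1 ∈ Itilde k}) :
    (2 : ℝ) ^ (k₁ + k₂ + k) ≤ |(jacobianΦ β₂ q.1 q.2.1 q.2.2).det| := by
  have hcone := sPrime_inter_subset_coneSet hk k hq
  obtain ⟨⟨hx, hy, hu, -⟩, hu' : q.1 + q.2.1 ∈ Itilde k⟩ := hq
  rw [Itilde, mem_ofPred_eq, abs_of_nonneg hu] at hu'
  calc (2 : ℝ) ^ (k₁ + k₂ + k) ≤ 9 * (2 ^ (k - 1) * 2 ^ (k₁ - 1) * 2 ^ (k₂ - 1)) := by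
        simp only [← zpow_add₀ (two_ne_zero : (2 : ℝ) ≠ 0)]
        rw [show k - 1 + (k₁ - 1) + (k₂ - 1) = k₁ + k₂ + k - 3 by ring,
          zpow_sub₀ two_ne_zero]
        have : (0 : ℝ) < 2 ^ (k₁ + k₂ + k) := by positivity
        norm_num
        linarith
    _ ≤ 9 * ((q.1 + q.2.1) * |q.1| * |q.2.1|) := by gcongr; exacts [hu'.1, hx.1, hy.1]
    _ ≤ _ := nine_mul_le_abs_det_jacobianΦ β₂ hcone

theorem stmt8 :
    ∃ C : ℝ, 0 < C ∧
      ∀ (k₁ k₂ k : ℤ), k₁ ≤ k₂ →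
      ∀ (β₂ : ℝ) (g : ℝ × ℝ × ℝ → ℝ),
        (∀ p, 0 ≤ g p) → MemLp g 2 volume →
        Function.support g ⊆ {p : ℝ × ℝ × ℝ | p.1 ∈ Itilde k} →
        (∫⁻ q in {q : ℝ × ℝ × ℝ | q.1 ∈ Itilde k₁ ∧ q.2.1 ∈ Itilde k₂ ∧
              0 ≤ q.1 + q.2.1 ∧ |q.2.2| ≤ (2 : ℝ) ^ (-10 : ℤ) * (q.1 + q.2.1)},
            ENNReal.ofReal (|g (q.1 + q.2.1,
              Real.sqrt 3 * q.1 ^ 2 - Real.sqrt 3 * q.2.1 ^ 2 + q.2.2 * q.1 +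
                β₂ * (q.1 + q.2.1),
              q.1 * q.2.1 * q.2.2 * (2 * Real.sqrt 3 + q.2.2 / (q.1 + q.2.1)))| ^ 2)) ^
          ((1 : ℝ) / 2) ≤
        ENNReal.ofReal (C * (2 : ℝ) ^ (-((k₁ : ℝ) + (k₂ : ℝ) + (k : ℝ)) / 2)) *
          eLpNorm g 2 volume := by
  refine ⟨1, one_pos, fun k₁ k₂ k hk β₂ g _ _ hsupp => ?_⟩
  let F : ℝ × ℝ × ℝ → ℝ≥0∞ := fun q => ENNReal.ofReal (|g (Φ β₂ q)| ^ 2)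
  change (∫⁻ q in sPrime k₁ k₂, F q) ^ (1 / 2 : ℝ) ≤ _
  have hA : MeasurableSet {q : ℝ × ℝ × ℝ | q.1 + q.2.1 ∈ Itilde k} :=
    measurableSet_Itilde k |>.preimage (by fun_prop)
  have hF : {q | q.1 + q.2.1 ∈ Itilde k}.indicator F = F :=
    indicator_eq_self.2 fun q hq => hsupp (by simpa [F] using hq)
  have hcone := sPrime_inter_subset_coneSet hk k
  rw [← hF, setLIntegral_indicator hA, inter_comm]
  calc _ ≤ ENNReal.ofReal (((2 : ℝ) ^ (k₁ + k₂ + k)) ^ (-1 / 2 : ℝ)) *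
          eLpNorm g 2 volume :=
        setLIntegral_sq_comp_rpow_half_le volume ((measurableSet_sPrime k₁ k₂).inter hA)
          (fun q hq => (hasFDerivAt_Φ β₂ (hcone hq).1.ne').hasFDerivWithinAt)
          ((injOn_Φ_coneSet β₂).mono hcone) (by positivity)
          (fun q hq => by
            rw [Matrix.det_toProdThreeCLM]; exact zpow_le_abs_det_jacobianΦ hk k β₂ hq) g
    _ = _ := by
        rw [← Real.rpow_intCast, ← Real.rpow_mul zero_le_two]
        push_cast
        ring_nf
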